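/- arXiv:0804.1762 — 5 statements merged into one kernel-verified Lean document; each statement's English description precedes it below -/
import Mathlib

section
/- Let n ≥ 1 and N = {1,…,n}. Suppose F assigns to every set function μ : P(N) → ℝ a function F_μ : ℝⁿ → ℝ. Then F satisfies (LM), (In), (PW) and (weak SPL) if and only if F_μ coincides with the discrete Choquet integral C_μ; precisely: (a) if F satisfies (LM), (In), (PW) and (weak SPL), then F_μ(x) = C_μ(x) for every set function μ with μ(∅) = 0 and every x ∈ ℝⁿ; (b) conversely, the family μ ↦ C_μ satisfies (LM), (In), (PW) and (weak SPL). -/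
/-- The vector in ℝⁿ equal to `s` on coordinates in `A` and `t` elsewhere. -/
def indVec {n : ℕ} (A : Finset (Fin n)) (s t : ℝ) : Fin n → ℝ :=
  fun i => if i ∈ A then s else t

/-- The Choquet sum of `x` w.r.t. the set function `μ` along the permutation `τ`:
`∑ i, x (τ i) * (μ {τ(i), …, τ(n)} - μ {τ(i+1), …, τ(n)})`. -/
def choquetSum {n : ℕ} (μ : Finset (Fin n) → ℝ) (x : Fin n → ℝ)
    (τ : Equiv.Perm (Fin n)) : ℝ :=
  ∑ i : Fin n, x (τ i) * (μ ((Finset.Ici i).image τ) - μ ((Finset.Ioi i).image τ))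

/-- The discrete Choquet integral of `x` w.r.t. the set function `μ`, computed
along a permutation putting `x` in nondecreasing order. -/
noncomputable def choquet {n : ℕ} (μ : Finset (Fin n) → ℝ) (x : Fin n → ℝ) : ℝ :=
  choquetSum μ x (Tuple.sort x)

/-- Axiom (LM): linearity with respect to the measure. -/
def LMaxiom {n : ℕ} (F : (Finset (Fin n) → ℝ) → (Fin n → ℝ) → ℝ) : Prop :=
  ∀ μ μ' : Finset (Fin n) → ℝ, ∀ γ δ : ℝ, ∀ x : Fin n → ℝ,
    F (fun A => γ * μ A + δ * μ' A) x = γ * F μ x + δ * F μ' x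

/-- Axiom (In): for every fuzzy measure `μ`, `F μ` is nondecreasing in each coordinate. -/
def InAxiom {n : ℕ} (F : (Finset (Fin n) → ℝ) → (Fin n → ℝ) → ℝ) : Prop :=
  ∀ μ : Finset (Fin n) → ℝ, μ ∅ = 0 → μ Finset.univ = 1 →
    (∀ A B : Finset (Fin n), A ⊆ B → μ A ≤ μ B) →
    ∀ x x' : Fin n → ℝ, (∀ i, x i ≤ x' i) → F μ x ≤ F μ x'

/-- Axiom (PW): properly weighted. -/
def PWaxiom {n : ℕ} (F : (Finset (Fin n) → ℝ) → (Fin n → ℝ) → ℝ) : Prop :=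
  ∀ μ : Finset (Fin n) → ℝ, μ ∅ = 0 → μ Finset.univ = 1 →
    ∀ A : Finset (Fin n), F μ (indVec A 1 0) = μ A

/-- Axiom (weak SPL): stability for the admissible positive linear transformations. -/
def wSPLaxiom {n : ℕ} (F : (Finset (Fin n) → ℝ) → (Fin n → ℝ) → ℝ) : Prop :=
  ∀ μ : Finset (Fin n) → ℝ, μ ∅ = 0 → μ Finset.univ = 1 →
    ∀ A : Finset (Fin n), ∀ α β : ℝ, 0 < α →
      F μ (indVec A (α + β) β) = α * F μ (indVec A 1 0) + β

/-!
By (LM) it suffices to treat the unanimity games `u_B = [B ⊆ ·]` with `B ≠ ∅`: through the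
Möbius transform they span the set functions vanishing at `∅`. A unanimity game is a fuzzy
measure, and (In), (PW) and (weak SPL) squeeze `F_{u_B}(x)` between its values at two two-valued
vectors, both equal to `min_B x = C_{u_B}(x)`. Conversely `C_μ` is linear in `μ`, the same Möbius
expansion evaluates it on two-valued vectors, and it gives the layer-cake formula
`C_μ(x) = a μ(N) + ∫_a^b μ{x ≥ t} dt`, from which monotonicity is read off.
-/

open Finset

section Mobius

variable {α 𝕜 : Type*} [Ring 𝕜] [PartialOrder α] [OrderBot α] [LocallyFiniteOrder α]
  [DecidableEq α]

def mobius (μ : α → 𝕜) (b : α) : 𝕜 := ∑ c ∈ Iic b, IncidenceAlgebra.mu 𝕜 c b * μ c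

lemma mobius_bot (μ : α → 𝕜) : mobius μ ⊥ = μ ⊥ := by
  simp [mobius]

lemma sum_Iic_mobius (μ : α → 𝕜) (a : α) : ∑ b ∈ Iic a, mobius μ b = μ a := by
  unfold mobius
  rw [sum_comm' (t' := Iic a) (s' := fun c => Icc c a) (by
    intro b c
    simp only [mem_Iic, mem_Icc]
    exact ⟨fun h => ⟨⟨h.2, h.1⟩, h.2.trans h.1⟩, fun h => ⟨h.1.2, h.1.1⟩⟩)]
  simp_rw [← sum_mul, IncidenceAlgebra.sum_Icc_mu_right, ite_mul, one_mul, zero_mul]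
  simp

end Mobius

section Unanimity

variable {ι : Type*} [DecidableEq ι]

def unanimity (B A : Finset ι) : ℝ := if B ⊆ A then 1 else 0

lemma unanimity_empty {B : Finset ι} (hB : B.Nonempty) : unanimity B ∅ = 0 := by
  simp [unanimity, hB.ne_empty]

lemma unanimity_mono (B : Finset ι) : Monotone (unanimity B) := by
  intro A A' h
  by_cases hBA : B ⊆ A
  · simp [unanimity, hBA, hBA.trans h]
  · simp only [unanimity, hBA, if_false]
    split_ifs <;> norm_num

lemma sum_mobius_mul_unanimity [Fintype ι] (μ : Finset ι → ℝ) (A : Finset ι) :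
    ∑ B, mobius μ B * unanimity B A = μ A := by
  simp only [unanimity, mul_ite, mul_one, mul_zero]
  rw [← sum_filter, filter_ge_eq_Iic, sum_Iic_mobius]

end Unanimity

namespace LMaxiom

variable {n : ℕ} {F G : (Finset (Fin n) → ℝ) → (Fin n → ℝ) → ℝ}

lemma map_zero (hF : LMaxiom F) (x : Fin n → ℝ) : F (fun _ => 0) x = 0 := by
  simpa using hF (fun _ => 0) (fun _ => 0) 0 0 x

lemma map_sum (hF : LMaxiom F) {κ : Type*} (s : Finset κ) (c : κ → ℝ)
    (ν : κ → Finset (Fin n) → ℝ) (x : Fin n → ℝ) :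
    F (fun A => ∑ i ∈ s, c i * ν i A) x = ∑ i ∈ s, c i * F (ν i) x := by
  classical
  induction s using Finset.induction_on with
  | empty => simpa using hF.map_zero x
  | insert i s hi ih =>
    simp only [sum_insert hi]
    rw [← ih, ← one_mul (F (fun A => ∑ j ∈ s, c j * ν j A) x), ← hF]
    simp only [one_mul]

lemma eq_of_unanimity (hF : LMaxiom F) (hG : LMaxiom G) (x : Fin n → ℝ)
    (h : ∀ B : Finset (Fin n), B.Nonempty → F (unanimity B) x = G (unanimity B) x)
    {μ : Finset (Fin n) → ℝ} (hμ : μ ∅ = 0) : F μ x = G μ x := by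
  rw [← funext (sum_mobius_mul_unanimity μ), hF.map_sum, hG.map_sum]
  refine sum_congr rfl fun B _ => ?_
  rcases B.eq_empty_or_nonempty with rfl | hB
  · rw [show mobius μ ∅ = 0 from (mobius_bot μ).trans hμ, zero_mul, zero_mul]
  · rw [h B hB]

end LMaxiom

section Choquet

variable {n : ℕ}

lemma lmAxiom_choquet : LMaxiom (n := n) choquet := by
  intro μ μ' γ δ x
  simp only [choquet, choquetSum, mul_sum, ← sum_add_distrib]
  exact sum_congr rfl fun i _ => by ring

lemma choquet_unanimity {B : Finset (Fin n)} (hB : B.Nonempty) (x : Fin n → ℝ) :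
    choquet (unanimity B) x = B.inf' hB x := by
  unfold choquet choquetSum
  set τ := Tuple.sort x
  -- `k` is the first position of `B` in the sorted order, the only place where `u_B` jumps.
  set k := B.inf' hB τ.symm
  have hsub (S : Finset (Fin n)) : B ⊆ S.image τ ↔ ∀ j ∈ B, τ.symm j ∈ S := by
    simp [subset_iff, ← Equiv.eq_symm_apply]
  have hIci (i : Fin n) : unanimity B ((Ici i).image τ) = if i ≤ k then 1 else 0 := by
    simp only [unanimity, hsub, mem_Ici, ← le_inf'_iff hB, k]
  have hIoi (i : Fin n) : unanimity B ((Ioi i).image τ) = if i < k then 1 else 0 := by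
    simp only [unanimity, hsub, mem_Ioi, ← lt_inf'_iff hB, k]
  have hjump (i : Fin n) :
      ((if i ≤ k then 1 else 0) - if i < k then 1 else 0 : ℝ) = if i = k then 1 else 0 := by
    split_ifs <;> (try norm_num) <;> omega
  have hmin : x (τ k) = B.inf' hB x := by
    obtain ⟨j, hj, hjk⟩ := exists_mem_eq_inf' hB τ.symm
    have hτk : τ k = j := by simp [k, hjk]
    refine le_antisymm (le_inf' _ _ fun j' hj' => ?_) (hτk ▸ inf'_le _ hj)
    have hmono : Monotone (x ∘ τ) := Tuple.monotone_sort x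
    exact (hmono (inf'_le τ.symm hj' : k ≤ _)).trans_eq (by simp)
  simp [hIci, hIoi, hjump, hmin]

lemma inf'_indVec {B : Finset (Fin n)} (hB : B.Nonempty) (A : Finset (Fin n)) {s t : ℝ}
    (hts : t ≤ s) : B.inf' hB (indVec A s t) = if B ⊆ A then s else t := by
  split_ifs with hBA
  · obtain ⟨j, hj⟩ := hB
    exact le_antisymm ((inf'_le _ hj).trans_eq (if_pos (hBA hj)))
      (le_inf' _ _ fun i hi => (if_pos (hBA hi)).ge)
  · obtain ⟨j, hj, hjA⟩ := not_subset.mp hBA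
    refine le_antisymm ((inf'_le _ hj).trans_eq (if_neg hjA)) (le_inf' _ _ fun i _ => ?_)
    unfold indVec
    split_ifs <;> linarith

lemma choquet_indVec {μ : Finset (Fin n) → ℝ} (hμ : μ ∅ = 0) (A : Finset (Fin n)) {s t : ℝ}
    (hts : t ≤ s) : choquet μ (indVec A s t) = (s - t) * μ A + t * μ univ := by
  refine lmAxiom_choquet.eq_of_unanimity (G := fun μ _ => (s - t) * μ A + t * μ univ)
    (fun μ μ' γ δ x => by ring) _ (fun B hB => ?_) hμ
  rw [choquet_unanimity hB, inf'_indVec hB A hts]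
  simp only [unanimity, subset_univ, if_true]
  split_ifs <;> ring

lemma intervalIntegrable_apply_superlevel (μ : Finset (Fin n) → ℝ) (x : Fin n → ℝ) (a b : ℝ) :
    IntervalIntegrable (fun t => μ {j | t ≤ x j}) MeasureTheory.volume a b := by
  have hsuper : Antitone fun t : ℝ => ({j | t ≤ x j} : Finset (Fin n)) :=
    fun t t' htt' j hj => by simp only [mem_filter, mem_univ, true_and] at hj ⊢; linarith
  simp_rw [← sum_mobius_mul_unanimity μ {j | _ ≤ x j}]
  have := IntervalIntegrable.sum univ fun B _ =>
    (((unanimity_mono B).comp_antitone hsuper).intervalIntegrable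
      (μ := MeasureTheory.volume) (a := a) (b := b)).const_mul (mobius μ B)
  simpa only [sum_fn, Function.comp_def] using this

lemma choquet_eq_add_integral {μ : Finset (Fin n) → ℝ} (hμ : μ ∅ = 0) {x : Fin n → ℝ} {a b : ℝ}
    (ha : ∀ i, a ≤ x i) (hb : ∀ i, x i ≤ b) :
    choquet μ x = a * μ univ + ∫ t in a..b, μ {j | t ≤ x j} := by
  refine lmAxiom_choquet.eq_of_unanimity
    (G := fun μ y => a * μ univ + ∫ t in a..b, μ {j | t ≤ y j}) (fun μ μ' γ δ y => ?_) x
    (fun B hB => ?_) hμ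
  · dsimp only
    rw [intervalIntegral.integral_add
      ((intervalIntegrable_apply_superlevel μ y a b).const_mul γ)
      ((intervalIntegrable_apply_superlevel μ' y a b).const_mul δ),
      intervalIntegral.integral_const_mul, intervalIntegral.integral_const_mul]
    ring
  · have hlevel (t : ℝ) :
        unanimity B {j | t ≤ x j} = Set.indicator {t | t ≤ B.inf' hB x} 1 t := by
      simp [unanimity, Set.indicator, subset_iff, le_inf'_iff]
    have hbounds : B.inf' hB x ∈ Set.Icc a b := by
      obtain ⟨j, hj⟩ := hB
      exact ⟨le_inf' _ _ fun i _ => ha i, (inf'_le _ hj).trans (hb j)⟩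
    simp only [choquet_unanimity hB, hlevel]
    rw [unanimity, if_pos (subset_univ B), intervalIntegral.integral_indicator hbounds]
    simp

lemma choquet_monotone {μ : Finset (Fin n) → ℝ} (hμ : μ ∅ = 0) (hmono : Monotone μ) :
    Monotone (choquet μ) := by
  intro x x' hx
  obtain ⟨a, ha⟩ := Finite.bddBelow_range x
  obtain ⟨b, hb⟩ := Finite.bddAbove_range x'
  have hxa (i : Fin n) : a ≤ x i := ha ⟨i, rfl⟩
  have hxb (i : Fin n) : x' i ≤ max a b := (hb ⟨i, rfl⟩).trans (le_max_right a b)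
  rw [choquet_eq_add_integral hμ hxa fun i => (hx i).trans (hxb i),
    choquet_eq_add_integral hμ (fun i => (hxa i).trans (hx i)) hxb]
  gcongr
  refine intervalIntegral.integral_mono_on (le_max_left a b)
    (intervalIntegrable_apply_superlevel μ x _ _) (intervalIntegrable_apply_superlevel μ x' _ _)
    fun t _ => hmono fun j hj => ?_
  simp only [mem_filter, mem_univ, true_and] at hj ⊢
  exact hj.trans (hx j)

lemma inAxiom_choquet : InAxiom (n := n) choquet :=
  fun _ h0 _ hmono _ _ hx => choquet_monotone h0 hmono hx

lemma pwAxiom_choquet : PWaxiom (n := n) choquet := by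
  intro μ h0 h1 A
  rw [choquet_indVec h0 A zero_le_one, h1]
  ring

lemma wSPLaxiom_choquet : wSPLaxiom (n := n) choquet := by
  intro μ h0 h1 A α β hα
  rw [choquet_indVec h0 A (by linarith), choquet_indVec h0 A zero_le_one, h1]
  ring

end Choquet

section Axioms

variable {n : ℕ} {F : (Finset (Fin n) → ℝ) → (Fin n → ℝ) → ℝ}

lemma apply_indVec_of_pwAxiom_of_wSPLaxiom (hPW : PWaxiom F) (hSPL : wSPLaxiom F)
    {μ : Finset (Fin n) → ℝ} (h0 : μ ∅ = 0) (h1 : μ univ = 1) (A : Finset (Fin n)) {s t : ℝ}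
    (hts : t ≤ s) : F μ (indVec A s t) = (s - t) * μ A + t := by
  rcases hts.lt_or_eq with hlt | rfl
  · have := hSPL μ h0 h1 A (s - t) t (sub_pos.mpr hlt)
    rwa [sub_add_cancel, hPW μ h0 h1] at this
  · have := hSPL μ h0 h1 ∅ 1 t one_pos
    rw [hPW μ h0 h1, h0] at this
    have hconst : indVec A t t = indVec ∅ (1 + t) t := funext fun i => by simp [indVec]
    rw [hconst, this]
    ring

lemma apply_unanimity_of_axioms (hIn : InAxiom F) (hPW : PWaxiom F) (hSPL : wSPLaxiom F)
    {B : Finset (Fin n)} (hB : B.Nonempty) (x : Fin n → ℝ) :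
    F (unanimity B) x = B.inf' hB x := by
  have h0 : unanimity B ∅ = 0 := unanimity_empty hB
  have h1 : unanimity B univ = 1 := if_pos (subset_univ B)
  have hmono := hIn _ h0 h1 fun _ _ h => unanimity_mono B h
  have htwo := apply_indVec_of_pwAxiom_of_wSPLaxiom hPW hSPL h0 h1
  obtain ⟨j, hj, hjm⟩ := exists_mem_eq_inf' hB x
  obtain ⟨a, ha⟩ := Finite.bddBelow_range x
  obtain ⟨b, hb⟩ := Finite.bddAbove_range x
  apply le_antisymm
  · calc F (unanimity B) x ≤ F (unanimity B) (indVec {j}ᶜ b (B.inf' hB x)) :=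
          hmono _ _ fun i => by
            by_cases hij : i = j
            · simp [indVec, hij, hjm]
            · simpa [indVec, hij] using hb ⟨i, rfl⟩
      _ = B.inf' hB x := by
          rw [htwo _ (hjm ▸ hb ⟨j, rfl⟩), unanimity, if_neg fun h => by simpa using h hj]
          ring
  · calc B.inf' hB x = F (unanimity B) (indVec B (B.inf' hB x) a) := by
          rw [htwo _ (le_inf' _ _ fun i _ => ha ⟨i, rfl⟩), unanimity, if_pos subset_rfl]
          ring
      _ ≤ F (unanimity B) x := hmono _ _ fun i => by
          by_cases hi : i ∈ B
          · exact (if_pos hi).trans_le (inf'_le x hi)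
          · simpa [indVec, hi] using ha ⟨i, rfl⟩

theorem eq_choquet_of_axioms (hLM : LMaxiom F) (hIn : InAxiom F) (hPW : PWaxiom F)
    (hSPL : wSPLaxiom F) {μ : Finset (Fin n) → ℝ} (hμ : μ ∅ = 0) (x : Fin n → ℝ) :
    F μ x = choquet μ x :=
  hLM.eq_of_unanimity lmAxiom_choquet x (fun B hB => by
    rw [apply_unanimity_of_axioms hIn hPW hSPL hB, choquet_unanimity hB]) hμ

end Axioms

theorem stmt0_general (n : ℕ)
    (F : (Finset (Fin n) → ℝ) → (Fin n → ℝ) → ℝ) :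
    ((LMaxiom F ∧ InAxiom F ∧ PWaxiom F ∧ wSPLaxiom F) →
        ∀ μ : Finset (Fin n) → ℝ, μ ∅ = 0 → ∀ x : Fin n → ℝ, F μ x = choquet μ x)
    ∧ (LMaxiom (fun μ : Finset (Fin n) → ℝ => choquet μ)
        ∧ InAxiom (fun μ : Finset (Fin n) → ℝ => choquet μ)
        ∧ PWaxiom (fun μ : Finset (Fin n) → ℝ => choquet μ)
        ∧ wSPLaxiom (fun μ : Finset (Fin n) → ℝ => choquet μ)) :=
  ⟨fun ⟨hLM, hIn, hPW, hSPL⟩ _ hμ => eq_choquet_of_axioms hLM hIn hPW hSPL hμ,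
    lmAxiom_choquet, inAxiom_choquet, pwAxiom_choquet, wSPLaxiom_choquet⟩

theorem stmt0 (n : ℕ) (hn : 1 ≤ n)
    (F : (Finset (Fin n) → ℝ) → (Fin n → ℝ) → ℝ) :
    ((LMaxiom F ∧ InAxiom F ∧ PWaxiom F ∧ wSPLaxiom F) →
        ∀ μ : Finset (Fin n) → ℝ, μ ∅ = 0 → ∀ x : Fin n → ℝ, F μ x = choquet μ x)
    ∧ (LMaxiom (fun μ : Finset (Fin n) → ℝ => choquet μ)
        ∧ InAxiom (fun μ : Finset (Fin n) → ℝ => choquet μ)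
        ∧ PWaxiom (fun μ : Finset (Fin n) → ℝ => choquet μ)
        ∧ wSPLaxiom (fun μ : Finset (Fin n) → ℝ => choquet μ)) :=
  stmt0_general n F
end

section
/- Let n ≥ 1, N = {1,…,n}, and let F : ℝⁿ → ℝ satisfy: (i) F is nondecreasing in each coordinate; (ii) F((α+β)_A, β_{−A}) = α F(1_A, 0_{−A}) + β for all A ⊆ N, α > 0, β ∈ ℝ; (iii) F(0,…,0) = 0 and F(1,…,1) = 1; (iv) F(1_A, 0_{−A}) ∈ {0,1} for all A ⊆ N. Then F(x) = C_μ(x) for all x ∈ ℝⁿ, where μ is the fuzzy measure defined by μ(A) = F(1_A, 0_{−A}) for all A ⊆ N. -/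
theorem stmt1 (n : ℕ) (hn : 1 ≤ n) (F : (Fin n → ℝ) → ℝ)
    (hIn : ∀ x x' : Fin n → ℝ, (∀ i, x i ≤ x' i) → F x ≤ F x')
    (hSPL : ∀ A : Finset (Fin n), ∀ α β : ℝ, 0 < α →
      F (indVec A (α + β) β) = α * F (indVec A 1 0) + β)
    (h0 : F (fun _ => 0) = 0) (h1 : F (fun _ => 1) = 1)
    (h01 : ∀ A : Finset (Fin n), F (indVec A 1 0) = 0 ∨ F (indVec A 1 0) = 1) :
    ∀ x : Fin n → ℝ, F x = choquet (fun A => F (indVec A 1 0)) x := by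
  intro x
  set μ : Finset (Fin n) → ℝ := fun A => F (indVec A 1 0) with hμ
  -- basic facts about μ
  have hμ0 : μ ∅ = 0 := by
    have : indVec (∅ : Finset (Fin n)) 1 0 = fun _ => (0 : ℝ) := by
      funext i; simp [indVec]
    simp only [hμ, this, h0]
  have hμmono : ∀ A B : Finset (Fin n), A ⊆ B → μ A ≤ μ B := by
    intro A B hAB
    apply hIn
    intro i
    by_cases hi : i ∈ A
    · simp [indVec, hi, hAB hi]
    · by_cases hi' : i ∈ B <;> simp [indVec, hi, hi']
  have hμuniv : μ Finset.univ = 1 := by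
    have : indVec (Finset.univ : Finset (Fin n)) 1 0 = fun _ => (1 : ℝ) := by
      funext i; simp [indVec]
    simp only [hμ, this, h1]
  have hμnn : ∀ A, 0 ≤ μ A := fun A => hμ0 ▸ hμmono ∅ A (Finset.empty_subset A)
  have hμle1 : ∀ A, μ A ≤ 1 := fun A => hμuniv ▸ hμmono A Finset.univ (Finset.subset_univ A)
  set τ := Tuple.sort x with hτ
  have hmono : Monotone (x ∘ τ) := Tuple.monotone_sort x
  -- the jump index k
  set T : Finset (Fin n) := Finset.univ.filter (fun i => μ ((Finset.Ici i).image τ) = 1)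
    with hT
  have hz : (⟨0, hn⟩ : Fin n) ∈ T := by
    have huniv : (Finset.Ici (⟨0, hn⟩ : Fin n)).image τ = Finset.univ := by
      apply Finset.eq_univ_iff_forall.mpr
      intro a
      refine Finset.mem_image.mpr ⟨τ.symm a, ?_, by simp⟩
      exact Finset.mem_Ici.mpr (Fin.mk_le_of_le_val (Nat.zero_le _))
    simp only [hT, Finset.mem_filter, Finset.mem_univ, true_and, huniv, hμuniv]
  have hTne : T.Nonempty := ⟨_, hz⟩
  set k := T.max' hTne with hk
  have hgk : μ ((Finset.Ici k).image τ) = 1 := by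
    have := T.max'_mem hTne
    simpa [hT] using this
  have hgi0 : ∀ i : Fin n, k < i → μ ((Finset.Ici i).image τ) = 0 := by
    intro i hi
    rcases h01 ((Finset.Ici i).image τ) with h | h
    · exact h
    · exfalso
      have : i ∈ T := by simp [hT, hμ] at h ⊢; exact h
      exact absurd (T.le_max' i this) (not_le.mpr hi)
  have hhk : μ ((Finset.Ioi k).image τ) = 0 := by
    rcases h01 ((Finset.Ioi k).image τ) with h | h
    · exact h
    · exfalso
      have hne : (Finset.Ioi k).Nonempty := by
        by_contra hc
        rw [Finset.not_nonempty_iff_eq_empty] at hc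
        rw [hc] at h
        simp only [Finset.image_empty] at h
        have h' : μ ∅ = 1 := h
        rw [hμ0] at h'; norm_num at h'
      set j := (Finset.Ioi k).min' hne with hj
      have hkj : k < j := Finset.mem_Ioi.mp ((Finset.Ioi k).min'_mem hne)
      have heq : Finset.Ioi k = Finset.Ici j := by
        ext a
        simp only [Finset.mem_Ioi, Finset.mem_Ici]
        constructor
        · intro ha; exact (Finset.Ioi k).min'_le a (Finset.mem_Ioi.mpr ha)
        · intro ha; exact lt_of_lt_of_le hkj ha
      rw [heq] at h
      have h' : μ ((Finset.Ici j).image τ) = 1 := h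
      rw [hgi0 j hkj] at h'; norm_num at h'
  have hc : choquet μ x = x (τ k) := by
    rw [choquet, choquetSum]
    rw [Finset.sum_eq_single k]
    · rw [hgk, hhk]; ring
    · intro i _ hik
      rcases lt_or_gt_of_ne hik with h | h
      · -- i < k : both terms are 1
        have h1' : μ ((Finset.Ioi i).image τ) = 1 := by
          have hsub : (Finset.Ici k).image τ ⊆ (Finset.Ioi i).image τ :=
            Finset.image_subset_image (fun a ha =>
              Finset.mem_Ioi.mpr (lt_of_lt_of_le h (Finset.mem_Ici.mp ha)))
          have := hμmono _ _ hsub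
          rw [hgk] at this
          exact le_antisymm (hμle1 _) this
        have h2' : μ ((Finset.Ici i).image τ) = 1 := by
          have hsub : (Finset.Ioi i).image τ ⊆ (Finset.Ici i).image τ :=
            Finset.image_subset_image (fun a ha => Finset.mem_Ici.mpr (le_of_lt (Finset.mem_Ioi.mp ha)))
          have := hμmono _ _ hsub
          rw [h1'] at this
          exact le_antisymm (hμle1 _) this
        rw [h1', h2']; ring
      · -- k < i : both terms are 0
        have h2' : μ ((Finset.Ici i).image τ) = 0 := hgi0 i h
        have h1' : μ ((Finset.Ioi i).image τ) = 0 := by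
          have hsub : (Finset.Ioi i).image τ ⊆ (Finset.Ici i).image τ :=
            Finset.image_subset_image (fun a ha => Finset.mem_Ici.mpr (le_of_lt (Finset.mem_Ioi.mp ha)))
          have := hμmono _ _ hsub
          rw [h2'] at this
          exact le_antisymm this (hμnn _)
        rw [h1', h2']; ring
    · intro h; exact absurd (Finset.mem_univ k) h
  rw [hc]
  set c := x (τ k) with hcc
  set M : ℝ := ∑ i : Fin n, |x i| with hM
  have hMub : ∀ i, x i ≤ M := by
    intro i
    calc x i ≤ |x i| := le_abs_self _
    _ ≤ M := Finset.single_le_sum (f := fun i => |x i|) (fun j _ => abs_nonneg _)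
        (Finset.mem_univ i)
  have hMlb : ∀ i, -M ≤ x i := by
    intro i
    have : |x i| ≤ M := Finset.single_le_sum (f := fun i => |x i|) (fun j _ => abs_nonneg _)
        (Finset.mem_univ i)
    have := neg_abs_le (x i)
    linarith
  apply le_antisymm
  · -- F x ≤ c
    have hub : ∀ i, x i ≤ indVec ((Finset.Ioi k).image τ) (M + 1) c i := by
      intro i
      by_cases hi : i ∈ (Finset.Ioi k).image τ
      · simp only [indVec, hi, if_pos]
        have := hMub i; linarith
      · simp only [indVec, hi, if_neg, if_false]
        have hle : τ.symm i ≤ k := by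
          by_contra hcon
          push_neg at hcon
          exact hi (Finset.mem_image.mpr ⟨τ.symm i, Finset.mem_Ioi.mpr hcon, by simp⟩)
        have := hmono hle
        simpa using this
    have h1'' : F x ≤ F (indVec ((Finset.Ioi k).image τ) (M + 1) c) := hIn _ _ hub
    have hα : (0:ℝ) < M + 1 - c := by have := hMub (τ k); rw [← hcc] at this; linarith
    have heq : (M + 1 : ℝ) = (M + 1 - c) + c := by ring
    rw [heq] at h1''
    rw [hSPL _ _ _ hα] at h1''
    have h2'' : F x ≤ (M + 1 - c) * μ ((Finset.Ioi k).image τ) + c := h1''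
    rw [hhk] at h2''
    linarith
  · -- c ≤ F x
    have hlb : ∀ i, indVec ((Finset.Ici k).image τ) c (-(M + 1)) i ≤ x i := by
      intro i
      by_cases hi : i ∈ (Finset.Ici k).image τ
      · simp only [indVec, hi, if_pos]
        rcases Finset.mem_image.mp hi with ⟨j, hj, hji⟩
        have : k ≤ τ.symm i := by
          rw [← hji]; simpa using Finset.mem_Ici.mp hj
        have := hmono this
        simpa using this
      · simp only [indVec, hi, if_neg, if_false]
        have := hMlb i; linarith
    have h1'' : F (indVec ((Finset.Ici k).image τ) c (-(M + 1))) ≤ F x := hIn _ _ hlb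
    have hα : (0:ℝ) < c + M + 1 := by have := hMlb (τ k); rw [← hcc] at this; linarith
    have heq : c = (c + M + 1) + (-(M + 1)) := by ring
    rw [heq] at h1''
    rw [hSPL _ _ _ hα] at h1''
    have h2'' : (c + M + 1) * μ ((Finset.Ici k).image τ) + -(M + 1) ≤ F x := h1''
    rw [hgk] at h2''
    linarith
end

section
/- Let n ≥ 1, N = {1,…,n}, and let F : ℝⁿ → ℝ satisfy: (i) F is nondecreasing in each coordinate; (ii) F((α+β)_A, β_{−A}) = α F(1_A, 0_{−A}) + β for all A ⊆ N, α > 0, β ∈ ℝ; (iii) F(0,…,0) = 0 and F(1,…,1) = 1; (iv) F(1_A, 0_{−A}) ∈ {0,1} for all A ⊆ N. Let x ∈ ℝⁿ and let σ be a permutation of N with x_{σ(1)} ≤ ⋯ ≤ x_{σ(n)}, and set k = max{ i ∈ {1,…,n} : F(1_{{σ(i),…,σ(n)}}, 0_{{σ(1),…,σ(i−1)}}) = 1 } (this set contains i = 1, so k is well defined). Then F(x) = x_{σ(k)}. -/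
theorem stmt2 (n : ℕ) (hn : 1 ≤ n) (F : (Fin n → ℝ) → ℝ)
    (hIn : ∀ x x' : Fin n → ℝ, (∀ i, x i ≤ x' i) → F x ≤ F x')
    (hSPL : ∀ A : Finset (Fin n), ∀ α β : ℝ, 0 < α →
      F (indVec A (α + β) β) = α * F (indVec A 1 0) + β)
    (h0 : F (fun _ => 0) = 0) (h1 : F (fun _ => 1) = 1)
    (h01 : ∀ A : Finset (Fin n), F (indVec A 1 0) = 0 ∨ F (indVec A 1 0) = 1)
    (x : Fin n → ℝ) (σ : Equiv.Perm (Fin n)) (hσ : Monotone (x ∘ σ))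
    (k : Fin n)
    (hk : F (indVec ((Finset.Ici k).image σ) 1 0) = 1)
    (hkmax : ∀ j : Fin n, F (indVec ((Finset.Ici j).image σ) 1 0) = 1 → j ≤ k) :
    F x = x (σ k) := by
  have Fconst : ∀ c : ℝ, F (fun _ => c) = c := by
    intro c
    have h := hSPL ∅ 1 c one_pos
    have e1 : indVec (∅ : Finset (Fin n)) (1 + c) c = fun _ => c := by
      funext i; simp [indVec]
    have e2 : indVec (∅ : Finset (Fin n)) 1 0 = fun _ => (0 : ℝ) := by
      funext i; simp [indVec]
    rw [e1, e2, h0] at h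
    linarith
  set β := x (σ k) with hβdef
  have bot : Fin n := ⟨0, hn⟩
  have hxσ : ∀ a b : Fin n, a ≤ b → x (σ a) ≤ x (σ b) := fun a b h => hσ h
  have hxlow : ∀ i : Fin n, x (σ (⟨0, hn⟩ : Fin n)) ≤ x i := by
    intro i
    have := hxσ (⟨0, hn⟩ : Fin n) (σ.symm i) (by simp [Fin.le_def])
    simpa using this
  have memB : ∀ i : Fin n, i ∈ (Finset.Ici k).image σ ↔ k ≤ σ.symm i := by
    intro i
    simp only [Finset.mem_image, Finset.mem_Ici]
    constructor
    · rintro ⟨j, hj, rfl⟩; simpa using hj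
    · intro h; exact ⟨σ.symm i, h, by simp⟩
  have memC : ∀ i : Fin n, i ∈ (Finset.Ioi k).image σ ↔ k < σ.symm i := by
    intro i
    simp only [Finset.mem_image, Finset.mem_Ioi]
    constructor
    · rintro ⟨j, hj, rfl⟩; simpa using hj
    · intro h; exact ⟨σ.symm i, h, by simp⟩
  -- lower bound
  have hlow : β ≤ F x := by
    set m := x (σ (⟨0, hn⟩ : Fin n)) with hm
    have hmβ : m ≤ β := hxσ _ _ (by simp [Fin.le_def])
    rcases lt_or_eq_of_le hmβ with hlt | heq
    · have h := hSPL ((Finset.Ici k).image σ) (β - m) m (by linarith)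
      have e1 : (β - m) + m = β := by ring
      rw [e1, hk] at h
      have hle : ∀ i, indVec ((Finset.Ici k).image σ) β m i ≤ x i := by
        intro i
        unfold indVec
        by_cases hi : i ∈ (Finset.Ici k).image σ
        · simp only [hi, if_true]
          have := hxσ k (σ.symm i) ((memB i).mp hi)
          simpa [hβdef] using this
        · simp only [hi, if_false]
          exact hxlow i
      have := hIn _ _ hle
      rw [h] at this
      linarith
    · have hle : ∀ i, (fun _ => β) i ≤ x i := by
        intro i; simpa [← heq] using hxlow i
      have := hIn _ _ hle
      rw [Fconst] at this
      exact this
  -- the Ioi-set has F-value 0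
  have hC0 : F (indVec ((Finset.Ioi k).image σ) 1 0) = 0 := by
    rcases h01 ((Finset.Ioi k).image σ) with h | h
    · exact h
    · exfalso
      by_cases hkn : (k : ℕ) + 1 < n
      · have hIoi : Finset.Ioi k = Finset.Ici (⟨(k : ℕ) + 1, hkn⟩ : Fin n) := by
          ext j
          simp only [Finset.mem_Ioi, Finset.mem_Ici, Fin.lt_def, Fin.le_def]
          omega
        rw [hIoi] at h
        have := hkmax _ h
        rw [Fin.le_def] at this
        simp at this
      · have hIoi : Finset.Ioi k = (∅ : Finset (Fin n)) := by
          ext j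
          simp only [Finset.mem_Ioi, Finset.notMem_empty, iff_false, not_lt]
          have := j.isLt
          exact Fin.le_def.mpr (by omega)
        rw [hIoi] at h
        have e2 : indVec ((∅ : Finset (Fin n)).image σ) 1 0 = fun _ => (0 : ℝ) := by
          funext i; simp [indVec]
        rw [e2, h0] at h
        norm_num at h
  -- upper bound
  have hup : F x ≤ β := by
    set M := x (σ (⟨n - 1, by omega⟩ : Fin n)) with hM
    have hβM : β ≤ M := hxσ _ _ (Fin.le_def.mpr (by have := k.isLt; simp; omega))
    have hxup : ∀ i : Fin n, x i ≤ M := by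
      intro i
      have := hxσ (σ.symm i) (⟨n - 1, by omega⟩ : Fin n)
        (Fin.le_def.mpr (by have := (σ.symm i).isLt; simp; omega))
      simpa using this
    rcases lt_or_eq_of_le hβM with hlt | heq
    · have h := hSPL ((Finset.Ioi k).image σ) (M - β) β (by linarith)
      have e1 : (M - β) + β = M := by ring
      rw [e1, hC0] at h
      have hle : ∀ i, x i ≤ indVec ((Finset.Ioi k).image σ) M β i := by
        intro i
        unfold indVec
        by_cases hi : i ∈ (Finset.Ioi k).image σ
        · simp only [hi, if_true]; exact hxup i
        · simp only [hi, if_false]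
          have hik : σ.symm i ≤ k := le_of_not_gt (fun hc => hi ((memC i).mpr hc))
          have := hxσ (σ.symm i) k hik
          simpa [hβdef] using this
      have := hIn _ _ hle
      rw [h] at this
      linarith
    · have hle : ∀ i, x i ≤ (fun _ => β) i := by
        intro i; simpa [heq] using hxup i
      have := hIn _ _ hle
      rw [Fconst] at this
      exact this
  linarith
end

section
/- Let n ≥ 1, N = {1,…,n}, let μ be a set function on N with μ(∅) = 0 and μ(N) > 0, and let F_μ : ℝⁿ → ℝ satisfy: (E8) F_μ(β,…,β) = β μ(N) for all β ∈ ℝ; and (E7 with γ = 1) for all A, B, C, D ⊆ N with μ(A) > μ(B) and μ(C) > μ(D), and all α > 0, β ∈ ℝ, one has (F_μ((α+β)_A, β_{−A}) − F_μ((α+β)_B, β_{−B})) / (F_μ((α+β)_C, β_{−C}) − F_μ((α+β)_D, β_{−D})) = (μ(A) − μ(B)) / (μ(C) − μ(D)), the denominators being nonzero. Then for every A ⊆ N with μ(A) > 0, every α > 0 and β ∈ ℝ, F_μ((α+β)_A, β_{−A}) = α μ(A) + β μ(N). -/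
theorem stmt4 (n : ℕ) (hn : 1 ≤ n)
    (μ : Finset (Fin n) → ℝ) (hμ0 : μ ∅ = 0) (hμN : 0 < μ Finset.univ)
    (F : (Fin n → ℝ) → ℝ)
    (hE8 : ∀ β : ℝ, F (fun _ => β) = β * μ Finset.univ)
    (hE7 : ∀ A B C D : Finset (Fin n), μ B < μ A → μ D < μ C →
      ∀ α β : ℝ, 0 < α →
        F (indVec C (α + β) β) - F (indVec D (α + β) β) ≠ 0 ∧
        (F (indVec A (α + β) β) - F (indVec B (α + β) β)) /
            (F (indVec C (α + β) β) - F (indVec D (α + β) β))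
          = (μ A - μ B) / (μ C - μ D)) :
    ∀ A : Finset (Fin n), 0 < μ A → ∀ α β : ℝ, 0 < α →
      F (indVec A (α + β) β) = α * μ A + β * μ Finset.univ := by
  intro A hA α β hα
  have h0 : μ ∅ < μ A := hμ0 ▸ hA
  have hU : μ ∅ < μ Finset.univ := hμ0 ▸ hμN
  obtain ⟨hden, heq⟩ := hE7 A ∅ Finset.univ ∅ h0 hU α β hα
  have he : indVec (∅ : Finset (Fin n)) (α + β) β = (fun _ => β) := by
    funext i; simp [indVec]
  have hu : indVec (Finset.univ : Finset (Fin n)) (α + β) β = (fun _ => α + β) := by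
    funext i; simp [indVec]
  rw [he, hu, hE8, hE8] at heq hden
  have hden' : (α + β) * μ Finset.univ - β * μ Finset.univ = α * μ Finset.univ := by ring
  rw [hden', hμ0, sub_zero, sub_zero] at heq
  have hμN' : μ Finset.univ ≠ 0 := ne_of_gt hμN
  have hα' : α ≠ 0 := ne_of_gt hα
  have := heq
  field_simp at this
  nlinarith [this]
end

section
/- Let n ≥ 1, N = {1,…,n}, μ a set function on N, and x ∈ ℝⁿ. If τ and τ' are two permutations of N both satisfying x_{τ(1)} ≤ ⋯ ≤ x_{τ(n)} and x_{τ'(1)} ≤ ⋯ ≤ x_{τ'(n)}, then Σ_{i=1}^n x_{τ(i)} (μ({τ(i),…,τ(n)}) − μ({τ(i+1),…,τ(n)})) = Σ_{i=1}^n x_{τ'(i)} (μ({τ'(i),…,τ'(n)}) − μ({τ'(i+1),…,τ'(n)})); i.e. the discrete Choquet integral C_μ(x) is independent of the choice of nondecreasing ordering permutation. -/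
private lemma ioi_castSucc_image {m : ℕ} (i : Fin m) (τ : Equiv.Perm (Fin (m+1))) :
    (Finset.Ioi i.castSucc).image τ = (Finset.Ici i.succ).image τ := by
  congr 1
  ext j; simp [Fin.castSucc_lt_iff_succ_le]

/-- Abel summation form of the Choquet sum. -/
private lemma choquetSum_abel {m : ℕ} (μ : Finset (Fin (m+1)) → ℝ) (x : Fin (m+1) → ℝ)
    (τ : Equiv.Perm (Fin (m+1))) :
    choquetSum μ x τ
      = x (τ 0) * μ Finset.univ - x (τ (Fin.last m)) * μ ∅
        + ∑ i : Fin m, (x (τ i.succ) - x (τ i.castSucc)) * μ ((Finset.Ici i.succ).image τ) := by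
  have h1 : (Finset.Ici (0 : Fin (m+1))).image τ = Finset.univ := by
    rw [show (Finset.Ici (0 : Fin (m+1))) = Finset.univ by ext j; simp [Fin.zero_le]]
    simp [Finset.image_univ_equiv]
  have h2 : (Finset.Ioi (Fin.last m)).image τ = ∅ := by
    rw [show (Finset.Ioi (Fin.last m)) = ∅ by
      ext j; simp [Fin.lt_iff_val_lt_val, Nat.not_lt.mpr (Fin.is_le j)]]
    simp
  unfold choquetSum
  have split1 : ∑ i : Fin (m+1), x (τ i) * μ ((Finset.Ici i).image τ)
      = x (τ 0) * μ Finset.univ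
        + ∑ i : Fin m, x (τ i.succ) * μ ((Finset.Ici i.succ).image τ) := by
    rw [Fin.sum_univ_succ, h1]
  have split2 : ∑ i : Fin (m+1), x (τ i) * μ ((Finset.Ioi i).image τ)
      = (∑ i : Fin m, x (τ i.castSucc) * μ ((Finset.Ici i.succ).image τ))
        + x (τ (Fin.last m)) * μ ∅ := by
    rw [Fin.sum_univ_castSucc, h2]
    congr 1
    exact Finset.sum_congr rfl fun i _ => by rw [ioi_castSucc_image]
  calc ∑ i : Fin (m+1), x (τ i) * (μ ((Finset.Ici i).image τ) - μ ((Finset.Ioi i).image τ))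
      = (∑ i : Fin (m+1), x (τ i) * μ ((Finset.Ici i).image τ))
        - ∑ i : Fin (m+1), x (τ i) * μ ((Finset.Ioi i).image τ) := by
        rw [← Finset.sum_sub_distrib]; exact Finset.sum_congr rfl fun i _ => by ring
    _ = _ := by
        rw [split1, split2]
        have : ∑ i : Fin m, (x (τ i.succ) - x (τ i.castSucc)) * μ ((Finset.Ici i.succ).image τ)
            = (∑ i : Fin m, x (τ i.succ) * μ ((Finset.Ici i.succ).image τ))
              - ∑ i : Fin m, x (τ i.castSucc) * μ ((Finset.Ici i.succ).image τ) := by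
          rw [← Finset.sum_sub_distrib]
          exact Finset.sum_congr rfl fun i _ => by ring
        rw [this]; ring

/-- If the values strictly increase across position `i`, the tail set is the level set. -/
private lemma tail_eq_level {m : ℕ} (x : Fin (m+1) → ℝ) (τ : Equiv.Perm (Fin (m+1)))
    (hτ : Monotone (x ∘ τ)) (i : Fin m) (hlt : x (τ i.castSucc) < x (τ i.succ)) :
    (Finset.Ici i.succ).image τ = Finset.univ.filter (fun j => x (τ i.succ) ≤ x j) := by
  ext j
  simp only [Finset.mem_image, Finset.mem_Ici, Finset.mem_filter, Finset.mem_univ, true_and]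
  constructor
  · rintro ⟨k, hk, rfl⟩
    exact hτ hk
  · intro hj
    refine ⟨τ.symm j, ?_, τ.apply_symm_apply j⟩
    by_contra h
    push_neg at h
    have h' : τ.symm j ≤ i.castSucc := by
      rw [Fin.le_castSucc_iff]; exact h
    have : x (τ (τ.symm j)) ≤ x (τ i.castSucc) := hτ h'
    rw [τ.apply_symm_apply] at this
    exact absurd (le_trans hj this) (not_le.mpr hlt)

theorem stmt8 (n : ℕ) (hn : 1 ≤ n)
    (μ : Finset (Fin n) → ℝ) (x : Fin n → ℝ)
    (τ τ' : Equiv.Perm (Fin n))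
    (hτ : Monotone (x ∘ τ)) (hτ' : Monotone (x ∘ τ')) :
    choquetSum μ x τ = choquetSum μ x τ' := by
  obtain ⟨m, rfl⟩ : ∃ m, n = m + 1 := ⟨n - 1, by omega⟩
  have heq : x ∘ τ = x ∘ τ' := Tuple.unique_monotone hτ hτ'
  have hval : ∀ i, x (τ i) = x (τ' i) := fun i => congrFun heq i
  rw [choquetSum_abel, choquetSum_abel, hval 0, hval (Fin.last m)]
  congr 1
  apply Finset.sum_congr rfl
  intro i _
  rcases eq_or_lt_of_le (hτ (i.castSucc_le_succ)) with h | h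
  · simp only [Function.comp_apply] at h
    rw [hval i.succ, hval i.castSucc] at h
    rw [hval i.succ, hval i.castSucc, ← h, sub_self, zero_mul, zero_mul]
  · simp only [Function.comp_apply] at h
    rw [tail_eq_level x τ hτ i h, hval i.succ, hval i.castSucc,
      tail_eq_level x τ' hτ' i (by rw [← hval i.succ, ← hval i.castSucc]; exact h)]
end
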